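/- arXiv:1104.2339 — 2 statements merged into one kernel-verified Lean document; each statement's English description precedes it below -/
import Mathlib

section
/- Let C be a finite skeletal EI-category with endotrivialisation quotient functor G : C → Ĉ, and let F : C → D be any functor to a category D in which every endomorphism is an identity. Then F factors uniquely through G, i.e., there is a unique functor F̄ : Ĉ → D with F = F̄ ∘ G. -/
open CategoryTheory

/-- The basic relation: `f ∼ g` iff `f = f'' ∘ h₁ ∘ f'` and `g = f'' ∘ h₂ ∘ f'` for some
morphisms `f', f''` and endomorphisms `h₁, h₂`. -/
def EIRel (C : Type) [Category.{0} C] : HomRel C := fun {x y} f g =>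
  ∃ (z : C) (f' : x ⟶ z) (h₁ h₂ : z ⟶ z) (f'' : z ⟶ y),
    f = f' ≫ h₁ ≫ f'' ∧ g = f' ≫ h₂ ≫ f''

/-- The transitive closure `≈` of `∼`; the endotrivialisation is `Ĉ = C/≈` with quotient
functor `G = Quotient.functor (EIRelT C) : C ⥤ Ĉ`. -/
def EIRelT (C : Type) [Category.{0} C] : HomRel C := fun {x y} =>
  Relation.TransGen (@EIRel C _ x y)

/-- Any functor `F` from a finite skeletal EI-category `C` to a category `D`
in which every endomorphism is an identity factors uniquely through the endotrivialisation
quotient functor `G : C ⥤ Ĉ`. -/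
theorem stmt_6 (C : Type) [Category.{0} C] [Fintype C] [∀ a b : C, Fintype (a ⟶ b)]
    (hEI : ∀ (c : C) (f : c ⟶ c), IsIso f)
    (hskel : ∀ x y : C, Nonempty (x ≅ y) → x = y)
    (D : Type) [Category.{0} D] (hD : ∀ (d : D) (f : d ⟶ d), f = 𝟙 d)
    (F : C ⥤ D) :
    ∃! Fbar : CategoryTheory.Quotient (EIRelT C) ⥤ D,
      Quotient.functor (EIRelT C) ⋙ Fbar = F := by
  have H : ∀ (x y : C) (f g : x ⟶ y), EIRelT C f g → F.map f = F.map g := by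
    intro x y f g h
    induction h with
    | single h =>
      obtain ⟨z, f', h₁, h₂, f'', hf, hg⟩ := h
      subst hf; subst hg
      simp [hD (F.obj z) (F.map h₁), hD (F.obj z) (F.map h₂)]
    | tail _ h ih =>
      obtain ⟨z, f', h₁, h₂, f'', hf, hg⟩ := h
      subst hf; subst hg
      rw [ih]
      simp [hD (F.obj z) (F.map h₁), hD (F.obj z) (F.map h₂)]
  refine ⟨CategoryTheory.Quotient.lift (EIRelT C) F H, CategoryTheory.Quotient.lift_spec _ _ _, ?_⟩
  intro Φ hΦ
  exact CategoryTheory.Quotient.lift_unique _ _ _ _ hΦ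
end

section
/- Let C be a finite EI-category with exactly two non-isomorphic objects x and y, G = Aut(x) and H = Aut(y) nonabelian finite groups whose orders are invertible in an algebraically closed field k, and suppose G × H acts freely on Hom_C(x,y), which is nonempty. Fix a simple kG-module M and a simple kH-module N, each of dimension at least 2, and a morphism f₀ ∈ Hom_C(x,y). For λ ∈ kˣ define the representation V_λ of C with V_λ(x) = M, V_λ(y) = N, group elements acting via the module structures, and every morphism h∘f₀∘g acting as the linear map ρ_N(h)·A_λ·ρ_M(g), where in fixed bases A_λ is the matrix with (1,1)-entry 1, (2,1)-entry λ, and all other entries 0. Then each V_λ is an indecomposable representation of C and V_λ ≅ V_μ implies λ = μ. -/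
open CategoryTheory

/-- A representation of `C` (functor `C ⥤ Vect_k`) is indecomposable if it is nonzero
and its only idempotent endomorphisms are `0` and `1`. -/
def IndecRep (k C : Type) [Field k] [Category.{0} C] (V : C ⥤ ModuleCat.{0} k) : Prop :=
  (∃ x : C, Nontrivial (V.obj x)) ∧
    ∀ e : V ⟶ V, e ≫ e = e → e = 0 ∨ e = 𝟙 V

/-- The linear map `A_λ : M → N` that, in the fixed bases `bM`, `bN`, is given by the
matrix with `(1,1)`-entry `1`, `(2,1)`-entry `λ`, and all other entries `0`. -/
noncomputable def Amat (k M N : Type) [Field k] [AddCommGroup M] [Module k M]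
    [AddCommGroup N] [Module k N] {dM dN : ℕ}
    (bM : Module.Basis (Fin dM) k M) (bN : Module.Basis (Fin dN) k N) (lam : k) : M →ₗ[k] N :=
  Matrix.toLin bM bN (Matrix.of fun i j =>
    if (j : ℕ) = 0 then (if (i : ℕ) = 0 then 1 else if (i : ℕ) = 1 then lam else 0)
    else 0)

/-- `VSpec` records that a representation `V : C ⥤ Vect_k` is the representation `V_λ`:
`V(x) = M` with `Aut(x)` acting by `ρM`, `V(y) = N` with `Aut(y)` acting by `ρN`, and
each morphism `h ∘ f₀ ∘ g : x ⟶ y` acting as `ρN(h) ∘ A ∘ ρM(g)`. -/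
def VSpec (k C : Type) [Field k] [Category.{0} C] {x y : C} (f₀ : x ⟶ y)
    (M N : Type) [AddCommGroup M] [Module k M] [AddCommGroup N] [Module k N]
    (ρM : Representation k (Aut x) M) (ρN : Representation k (Aut y) N)
    (A : M →ₗ[k] N) (V : C ⥤ ModuleCat.{0} k) : Prop :=
  ∃ (ex : V.obj x ≅ ModuleCat.of k M) (ey : V.obj y ≅ ModuleCat.of k N),
    (∀ g : Aut x, V.map g.hom ≫ ex.hom = ex.hom ≫ ModuleCat.ofHom (ρM g)) ∧
    (∀ h : Aut y, V.map h.hom ≫ ey.hom = ey.hom ≫ ModuleCat.ofHom (ρN h)) ∧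
    (∀ (g : Aut x) (h : Aut y),
      V.map (g.hom ≫ f₀ ≫ h.hom) ≫ ey.hom =
        ex.hom ≫ ModuleCat.ofHom ((ρN h).comp (A.comp (ρM g))))

/-!
By Schur's lemma, a morphism `V ⟶ W` between two representations of this shape is a scalar `c`
on `M` and a scalar `d` on `N`, and naturality at `f₀` forces `c • A' = d • A`. For `W = V` and
`A ≠ 0` this gives `c = d`; since every object is isomorphic to `x` or `y`, every endomorphism
of `V` is then the scalar `c`, and an idempotent scalar is `0` or `1`. For an isomorphism
`c ≠ 0`, and comparing the `(1,1)` and `(2,1)` entries of `c • A_μ = d • A_λ` gives `c = d` and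
`μ = λ`.
-/

theorem Representation.exists_eq_smul_id_of_comm {k G P : Type*} [Field k] [IsAlgClosed k]
    [Monoid G] [AddCommGroup P] [Module k P] [FiniteDimensional k P]
    (ρ : Representation k G P) [ρ.IsIrreducible]
    (φ : P →ₗ[k] P) (hφ : ∀ g, φ ∘ₗ ρ g = ρ g ∘ₗ φ) : ∃ c : k, φ = c • LinearMap.id := by
  obtain ⟨c, hc⟩ := IsIrreducible.algebraMap_intertwiningMap_bijective_of_isAlgClosed.2
    (⟨φ, hφ⟩ : ρ.IntertwiningMap ρ)
  exact ⟨c, (congrArg IntertwiningMap.toLinearMap hc).symm⟩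

namespace CategoryTheory

theorem NatTrans.conj_naturality {C D : Type*} [Category C] [Category D] {V W : C ⥤ D}
    (η : V ⟶ W) {a b : C} (f : a ⟶ b) {P Q : D} {ea : V.obj a ≅ P} {eb : V.obj b ≅ Q}
    {ea' : W.obj a ≅ P} {eb' : W.obj b ≅ Q} {r r' : P ⟶ Q}
    (hV : V.map f ≫ eb.hom = ea.hom ≫ r) (hW : W.map f ≫ eb'.hom = ea'.hom ≫ r') :
    r ≫ eb.inv ≫ η.app b ≫ eb'.hom = (ea.inv ≫ η.app a ≫ ea'.hom) ≫ r' := by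
  rw [← Iso.inv_comp_eq] at hV hW
  simp [← hV, ← hW]

theorem NatTrans.app_eq_smul_id_of_iso {k C D : Type*} [Semiring k] [Category C] [Category D]
    [Preadditive D] [Linear k D] {V : C ⥤ D} (e : V ⟶ V) {z a : C} (σ : z ≅ a) {c : k}
    (he : e.app a = c • 𝟙 _) : e.app z = c • 𝟙 _ := by
  rw [← cancel_mono (V.map σ.hom), ← e.naturality, he]
  simp

theorem smul_id_eq_zero_or_eq_id_of_idem {k D : Type*} [Field k] [Category D] [Preadditive D]
    [Linear k D] {X : D} (hX : 𝟙 X ≠ 0) {c : k} (h : (c • 𝟙 X) ≫ (c • 𝟙 X) = c • 𝟙 X) :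
    c • 𝟙 X = 0 ∨ c • 𝟙 X = 𝟙 X := by
  simp only [Linear.comp_smul, Category.comp_id, smul_smul] at h
  rcases eq_zero_or_one_of_sq_eq_self (smul_left_injective k hX (by simpa [sq] using h))
    with rfl | rfl <;> simp

theorem _root_.ModuleCat.id_ne_zero {R : Type*} [Ring R] (X : ModuleCat R) [Nontrivial X] :
    𝟙 X ≠ 0 := by
  rw [Ne, ← Limits.IsZero.iff_id_eq_zero, ModuleCat.isZero_iff_subsingleton]
  exact not_subsingleton X

theorem NatTrans.app_eq_smul_of_isIrreducible {k C : Type} [Field k] [IsAlgClosed k]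
    [Category.{0} C] {V W : C ⥤ ModuleCat.{0} k} {a : C} {P : Type}
    [AddCommGroup P] [Module k P] [FiniteDimensional k P]
    (ρ : Representation k (Aut a) P) [ρ.IsIrreducible]
    {e : V.obj a ≅ ModuleCat.of k P} {e' : W.obj a ≅ ModuleCat.of k P}
    (hV : ∀ g : Aut a, V.map g.hom ≫ e.hom = e.hom ≫ ModuleCat.ofHom (ρ g))
    (hW : ∀ g : Aut a, W.map g.hom ≫ e'.hom = e'.hom ≫ ModuleCat.ofHom (ρ g)) (η : V ⟶ W) :
    ∃ c : k, η.app a = c • (e.hom ≫ e'.inv) := by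
  obtain ⟨c, hc⟩ := ρ.exists_eq_smul_id_of_comm (e.inv ≫ η.app a ≫ e'.hom).hom
    fun g => congrArg ModuleCat.Hom.hom (η.conj_naturality g.hom (hV g) (hW g))
  refine ⟨c, ?_⟩
  have hφ : e.inv ≫ η.app a ≫ e'.hom = c • 𝟙 _ := ModuleCat.hom_ext (by simpa using hc)
  rw [Iso.inv_comp_eq, ← Iso.eq_comp_inv] at hφ
  simp [hφ]

end CategoryTheory

section VSpec
variable {k C : Type} [Field k] [Category.{0} C] {x y : C} {f₀ : x ⟶ y}
  {M N : Type} [AddCommGroup M] [Module k M] [AddCommGroup N] [Module k N]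
  {ρM : Representation k (Aut x) M} {ρN : Representation k (Aut y) N}
  {A A' : M →ₗ[k] N} {V W : C ⥤ ModuleCat.{0} k}

theorem VSpec.nontrivial_obj [Nontrivial M] (hV : VSpec k C f₀ M N ρM ρN A V) :
    Nontrivial (V.obj x) := by
  obtain ⟨ex, -⟩ := hV
  exact ex.toLinearEquiv.symm.injective.nontrivial

variable [IsAlgClosed k] [FiniteDimensional k M] [FiniteDimensional k N]
  [ρM.IsIrreducible] [ρN.IsIrreducible]

theorem CategoryTheory.NatTrans.exists_smul_of_VSpec_isos
    {ex : V.obj x ≅ ModuleCat.of k M} {ey : V.obj y ≅ ModuleCat.of k N}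
    {ex' : W.obj x ≅ ModuleCat.of k M} {ey' : W.obj y ≅ ModuleCat.of k N}
    (hx : ∀ g : Aut x, V.map g.hom ≫ ex.hom = ex.hom ≫ ModuleCat.ofHom (ρM g))
    (hy : ∀ h : Aut y, V.map h.hom ≫ ey.hom = ey.hom ≫ ModuleCat.ofHom (ρN h))
    (hf : ∀ (g : Aut x) (h : Aut y),
      V.map (g.hom ≫ f₀ ≫ h.hom) ≫ ey.hom =
        ex.hom ≫ ModuleCat.ofHom ((ρN h).comp (A.comp (ρM g))))
    (hx' : ∀ g : Aut x, W.map g.hom ≫ ex'.hom = ex'.hom ≫ ModuleCat.ofHom (ρM g))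
    (hy' : ∀ h : Aut y, W.map h.hom ≫ ey'.hom = ey'.hom ≫ ModuleCat.ofHom (ρN h))
    (hf' : ∀ (g : Aut x) (h : Aut y),
      W.map (g.hom ≫ f₀ ≫ h.hom) ≫ ey'.hom =
        ex'.hom ≫ ModuleCat.ofHom ((ρN h).comp (A'.comp (ρM g))))
    (η : V ⟶ W) :
    ∃ c d : k, η.app x = c • (ex.hom ≫ ex'.inv) ∧ η.app y = d • (ey.hom ≫ ey'.inv) ∧
      c • A' = d • A := by
  obtain ⟨c, hc⟩ := η.app_eq_smul_of_isIrreducible ρM hx hx'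
  obtain ⟨d, hd⟩ := η.app_eq_smul_of_isIrreducible ρN hy hy'
  refine ⟨c, d, hc, hd, ?_⟩
  have hx1 : (1 : Aut x).hom = 𝟙 x := rfl
  have hy1 : (1 : Aut y).hom = 𝟙 y := rfl
  have hsq := η.conj_naturality f₀ (by simpa [hx1, hy1, Module.End.one_eq_id] using hf 1 1)
    (by simpa [hx1, hy1, Module.End.one_eq_id] using hf' 1 1)
  rw [hc, hd] at hsq
  simpa using (congrArg ModuleCat.Hom.hom hsq).symm

theorem VSpec.indecRep [Nontrivial M] (hobj : ∀ z : C, Nonempty (z ≅ x) ∨ Nonempty (z ≅ y))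
    (hA : A ≠ 0) (hV : VSpec k C f₀ M N ρM ρN A V) : IndecRep k C V := by
  have hVx := hV.nontrivial_obj
  refine ⟨⟨x, hVx⟩, fun e he => ?_⟩
  obtain ⟨ex, ey, hx, hy, hf⟩ := hV
  obtain ⟨c, d, hc, hd, hcd⟩ := e.exists_smul_of_VSpec_isos hx hy hf hx hy hf
  obtain rfl : c = d := smul_left_injective k hA hcd
  have he_smul : e = c • 𝟙 V := by
    ext1; funext z
    rcases hobj z with ⟨⟨σ⟩⟩ | ⟨⟨σ⟩⟩
    · simpa using e.app_eq_smul_id_of_iso σ (by simpa using hc)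
    · simpa using e.app_eq_smul_id_of_iso σ (by simpa using hd)
  have hid : 𝟙 V ≠ 0 := fun h => (V.obj x).id_ne_zero (by simpa using NatTrans.congr_app h x)
  rw [he_smul] at he ⊢
  exact smul_id_eq_zero_or_eq_id_of_idem hid he

theorem VSpec.exists_smul_eq_smul_of_iso [Nontrivial M] (hV : VSpec k C f₀ M N ρM ρN A V)
    (hW : VSpec k C f₀ M N ρM ρN A' W) (η : V ≅ W) : ∃ c d : k, c ≠ 0 ∧ c • A' = d • A := by
  have hVx := hV.nontrivial_obj
  obtain ⟨ex, ey, hx, hy, hf⟩ := hV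
  obtain ⟨ex', ey', hx', hy', hf'⟩ := hW
  obtain ⟨c, d, hc, -, hcd⟩ := η.hom.exists_smul_of_VSpec_isos hx hy hf hx' hy' hf'
  refine ⟨c, d, fun h0 => ?_, hcd⟩
  exact (V.obj x).id_ne_zero (by simpa [h0] using congrArg (· ≫ η.inv.app x) hc)

end VSpec

section Amat
variable {k M N : Type} [Field k] [AddCommGroup M] [Module k M] [AddCommGroup N] [Module k N]
  {dM dN : ℕ} (bM : Module.Basis (Fin dM) k M) (bN : Module.Basis (Fin dN) k N)

theorem Amat_basis_zero_repr (hM : 0 < dM) (t : k) (i : Fin dN) :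
    bN.repr (Amat k M N bM bN t (bM ⟨0, hM⟩)) i =
      if (i : ℕ) = 0 then 1 else if (i : ℕ) = 1 then t else 0 := by
  rw [Amat, Matrix.toLin_self, Module.Basis.repr_sum_self]
  simp

theorem Amat_ne_zero (hM : 0 < dM) (hN : 0 < dN) (t : k) : Amat k M N bM bN t ≠ 0 := fun h => by
  simpa [h] using Amat_basis_zero_repr bM bN hM t ⟨0, hN⟩

variable {bM bN} in
theorem eq_and_mul_eq_of_smul_Amat_eq_smul_Amat (hM : 0 < dM) (hN : 2 ≤ dN) {c d t t' : k}
    (h : c • Amat k M N bM bN t' = d • Amat k M N bM bN t) : c = d ∧ c * t' = d * t := by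
  have hcoord (i : Fin dN) := congrArg (fun L => bN.repr (L (bM ⟨0, hM⟩)) i) h
  simp only [LinearMap.smul_apply, map_smul, Finsupp.smul_apply, smul_eq_mul,
    Amat_basis_zero_repr] at hcoord
  exact ⟨by simpa using hcoord ⟨0, by omega⟩, by simpa using hcoord ⟨1, hN⟩⟩

end Amat

/-- Let `C` be a finite EI-category with exactly two non-isomorphic
objects `x, y`, with `G = Aut(x)` and `H = Aut(y)` nonabelian of orders invertible in
an algebraically closed field `k`, and suppose `G × H` acts freely on the nonempty set
`Hom(x,y)`; fix `f₀ : x ⟶ y`. Let `M`, `N` be simple `kG`- resp. `kH`-modules of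
dimension at least `2` with fixed bases. For `λ ∈ kˣ`, let `V_λ` be the representation
with `V_λ(x) = M`, `V_λ(y) = N`, group elements acting via the module structures, and
`h ∘ f₀ ∘ g` acting as `ρN(h)·A_λ·ρM(g)`, where `A_λ` has `(1,1)`-entry `1`,
`(2,1)`-entry `λ` and all other entries `0`. Then each `V_λ` is indecomposable, and
`V_λ ≅ V_μ` implies `λ = μ`. -/
theorem stmt_17 (k C : Type) [Field k] [IsAlgClosed k] [Category.{0} C] [Fintype C]
    [∀ a b : C, Fintype (a ⟶ b)]
    (hEI : ∀ (c : C) (f : c ⟶ c), IsIso f)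
    (x y : C) (hxy : ¬ Nonempty (x ≅ y))
    (hobj : ∀ z : C, Nonempty (z ≅ x) ∨ Nonempty (z ≅ y))
    (hGna : ∃ a b : Aut x, a * b ≠ b * a) (hHna : ∃ a b : Aut y, a * b ≠ b * a)
    (hGk : (Nat.card (Aut x) : k) ≠ 0) (hHk : (Nat.card (Aut y) : k) ≠ 0)
    (hfree : ∀ (g : Aut x) (h : Aut y) (f : x ⟶ y),
      g.inv ≫ f ≫ h.hom = f → g = 1 ∧ h = 1)
    (f₀ : x ⟶ y)
    (M N : Type) [AddCommGroup M] [Module k M] [AddCommGroup N] [Module k N]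
    {dM dN : ℕ} (bM : Module.Basis (Fin dM) k M) (bN : Module.Basis (Fin dN) k N)
    (hdM : 2 ≤ dM) (hdN : 2 ≤ dN)
    (ρM : Representation k (Aut x) M) (ρN : Representation k (Aut y) N)
    (hMsimple : IsSimpleModule (MonoidAlgebra k (Aut x)) ρM.asModule)
    (hNsimple : IsSimpleModule (MonoidAlgebra k (Aut y)) ρN.asModule) :
    ∀ (lam mu : kˣ) (V W : C ⥤ ModuleCat.{0} k),
      VSpec k C f₀ M N ρM ρN (Amat k M N bM bN (lam : k)) V →
      VSpec k C f₀ M N ρM ρN (Amat k M N bM bN (mu : k)) W →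
      IndecRep k C V ∧ (Nonempty (V ≅ W) → lam = mu) := by
  intro lam mu V W hV hW
  have : FiniteDimensional k M := .of_basis bM
  have : FiniteDimensional k N := .of_basis bN
  have : Nontrivial M := nontrivial_of_ne (bM ⟨0, by omega⟩) 0 (bM.ne_zero _)
  have : ρM.IsIrreducible := (ρM.irreducible_iff_isSimpleModule_asModule).mpr hMsimple
  have : ρN.IsIrreducible := (ρN.irreducible_iff_isSimpleModule_asModule).mpr hNsimple
  refine ⟨hV.indecRep hobj (Amat_ne_zero bM bN (by omega) (by omega) _), fun ⟨η⟩ => ?_⟩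
  obtain ⟨c, d, hc, hcd⟩ := hV.exists_smul_eq_smul_of_iso hW η
  obtain ⟨rfl, hmul⟩ := eq_and_mul_eq_of_smul_Amat_eq_smul_Amat (by omega) hdN hcd
  exact Units.ext (mul_left_cancel₀ hc hmul).symm
end
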